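/- arXiv:2404.05272 — 5 statements merged into one kernel-verified Lean document; each statement's English description precedes it below -/
import Mathlib

section
/- Let m ≥ 1 and suppose given real numbers l₁ < r₁ ≤ l₂ < r₂ ≤ ⋯ ≤ l_m < r_m and continuous functions g₁, …, g_m : ℝ → ℝ with g_j(a) ≥ 0 for all a ∈ [l_j, r_j]. Let f : ℝ → ℝ be continuous and strictly increasing. Assume: (i) for each j, the difference g_j − f has the single-crossing property on D_j = {a ∈ ℝ : g_j(a) ≥ 0 and f(a) ≥ 0}, i.e., whenever (g_j − f)(a) = 0 with a ∈ D_j, then (g_j − f)(a₊) < 0 for all a₊ ∈ D_j with a₊ > a and (g_j − f)(a₋) > 0 for all a₋ ∈ D_j with a₋ < a; (ii) for each j < m, if r_j = l_{j+1} then g_j(r_j) ≥ g_{j+1}(r_j); (iii) for each j < m, if r_j < l_{j+1} then g_{j+1}(l_{j+1}) = 0. Then there is at most one point a ∈ ⋃_{j=1}^m (l_j, r_j] such that f(a) = g_j(a), where j is the index with a ∈ (l_j, r_j]. -/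
/-!
Past a crossing point `a`, the new utility `f` stays strictly above the envelope. On the
interval containing `a` this is single crossing together with the intermediate value theorem:
a second zero of `g j - f` after `a` is impossible. The property `g ≤ f`, `0 ≤ f` then passes
from the right endpoint of one allocation interval to the left endpoint of the next, since at a
junction the envelope only jumps down and after a gap it restarts at `0 ≤ f`; on that next
interval the same argument applies again.
-/

open Set

def SingleCrossingOn (B : ℝ → ℝ) (D : Set ℝ) : Prop :=
  ∀ a ∈ D, B a = 0 → (∀ b ∈ D, a < b → B b < 0) ∧ (∀ b ∈ D, b < a → 0 < B b)

section Interval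

variable {g f : ℝ → ℝ} {L R : ℝ}

theorem SingleCrossingOn.lt_of_mem_Ioc
    (hsc : SingleCrossingOn (g - f) {x | 0 ≤ g x ∧ 0 ≤ f x})
    (hgnn : ∀ x ∈ Icc L R, 0 ≤ g x) (hg : ContinuousOn g (Icc L R))
    (hf : ContinuousOn f (Icc L R)) (hfm : MonotoneOn f (Icc L R))
    (hgL : g L ≤ f L) (hfL : 0 ≤ f L) {x : ℝ} (hx : x ∈ Ioc L R) : g x < f x := by
  have hsub : Icc L x ⊆ Icc L R := Icc_subset_Icc_right hx.2
  have hLx : L ∈ Icc L x := left_mem_Icc.2 hx.1.le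
  have hmem : ∀ y ∈ Icc L x, y ∈ {x | 0 ≤ g x ∧ 0 ≤ f x} := fun y hy =>
    ⟨hgnn y (hsub hy), hfL.trans (hfm (hsub hLx) (hsub hy) hy.1)⟩
  by_contra! hxle
  obtain ⟨c, hc, hc0⟩ : ∃ c ∈ Icc L x, (g - f) c = 0 :=
    intermediate_value_Icc hx.1.le ((hg.mono hsub).sub (hf.mono hsub))
      ⟨sub_nonpos.2 hgL, sub_nonneg.2 hxle⟩
  obtain ⟨hafter, hbefore⟩ := hsc c (hmem c hc) hc0
  rcases hc.2.lt_or_eq with hcx | rfl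
  · exact (hafter x (hmem x (right_mem_Icc.2 hx.1.le)) hcx).not_ge (sub_nonneg.2 hxle)
  · exact (hbefore L (hmem L hLx) hx.1).not_ge (sub_nonpos.2 hgL)

theorem SingleCrossingOn.le_right
    (hsc : SingleCrossingOn (g - f) {x | 0 ≤ g x ∧ 0 ≤ f x})
    (hgnn : ∀ x ∈ Icc L R, 0 ≤ g x) (hg : ContinuousOn g (Icc L R))
    (hf : ContinuousOn f (Icc L R)) (hfm : MonotoneOn f (Icc L R))
    (hgL : g L ≤ f L) (hfL : 0 ≤ f L) (hLR : L ≤ R) : g R ≤ f R ∧ 0 ≤ f R := by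
  rcases hLR.lt_or_eq with hLR | rfl
  · exact ⟨(hsc.lt_of_mem_Ioc hgnn hg hf hfm hgL hfL ⟨hLR, le_rfl⟩).le,
      hfL.trans (hfm (left_mem_Icc.2 hLR.le) (right_mem_Icc.2 hLR.le) hLR.le)⟩
  · exact ⟨hgL, hfL⟩

end Interval

section Chain

variable {m : ℕ} {l r : ℕ → ℝ} {g : ℕ → ℝ → ℝ} {f : ℝ → ℝ}

theorem right_le_left_of_lt (hlr : ∀ j < m, l j ≤ r j)
    (hord : ∀ j, j + 1 < m → r j ≤ l (j + 1)) {p q : ℕ} (hpq : p < q) (hq : q < m) :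
    r p ≤ l q := by
  induction q, hpq using Nat.le_induction with
  | base => exact hord p hq
  | succ q hpq ih => exact (ih (by omega)).trans ((hlr q (by omega)).trans (hord q hq))

theorem le_left_succ_of_le_right (hfm : Monotone f)
    (hord : ∀ j, j + 1 < m → r j ≤ l (j + 1))
    (hjump : ∀ j, j + 1 < m → r j = l (j + 1) → g (j + 1) (r j) ≤ g j (r j))
    (hgap : ∀ j, j + 1 < m → r j < l (j + 1) → g (j + 1) (l (j + 1)) = 0)
    {i : ℕ} (hi : i + 1 < m) (hgr : g i (r i) ≤ f (r i)) (hfr : 0 ≤ f (r i)) :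
    g (i + 1) (l (i + 1)) ≤ f (l (i + 1)) ∧ 0 ≤ f (l (i + 1)) := by
  rcases (hord i hi).lt_or_eq with hlt | heq
  · rw [hgap i hi hlt]
    exact ⟨hfr.trans (hfm hlt.le), hfr.trans (hfm hlt.le)⟩
  · rw [← heq]
    exact ⟨(hjump i hi heq).trans hgr, hfr⟩

theorem le_right_of_crossing (hlr : ∀ j < m, l j < r j)
    (hord : ∀ j, j + 1 < m → r j ≤ l (j + 1))
    (hgcont : ∀ j < m, Continuous (g j))
    (hgnn : ∀ j < m, ∀ a ∈ Icc (l j) (r j), 0 ≤ g j a)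
    (hfcont : Continuous f) (hfm : Monotone f)
    (hsc : ∀ j < m, SingleCrossingOn (g j - f) {x | 0 ≤ g j x ∧ 0 ≤ f x})
    (hjump : ∀ j, j + 1 < m → r j = l (j + 1) → g (j + 1) (r j) ≤ g j (r j))
    (hgap : ∀ j, j + 1 < m → r j < l (j + 1) → g (j + 1) (l (j + 1)) = 0)
    {j : ℕ} (hj : j < m) {a : ℝ} (ha : a ∈ Ioc (l j) (r j)) (hfa : f a = g j a)
    {i : ℕ} (hji : j ≤ i) (hi : i < m) : g i (r i) ≤ f (r i) ∧ 0 ≤ f (r i) := by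
  induction i, hji using Nat.le_induction with
  | base =>
    exact (hsc j hj).le_right (fun x hx => hgnn j hj x ⟨ha.1.le.trans hx.1, hx.2⟩)
      (hgcont j hj).continuousOn hfcont.continuousOn (hfm.monotoneOn _) hfa.ge
      (hfa ▸ hgnn j hj a (Ioc_subset_Icc_self ha)) ha.2
  | succ i _ ih =>
    obtain ⟨hgl, hfl⟩ := le_left_succ_of_le_right hfm hord hjump hgap hi
      (ih (by omega)).1 (ih (by omega)).2
    exact (hsc _ hi).le_right (hgnn _ hi) (hgcont _ hi).continuousOn hfcont.continuousOn
      (hfm.monotoneOn _) hgl hfl (hlr _ hi).le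

theorem lt_of_crossing_lt (hlr : ∀ j < m, l j < r j)
    (hord : ∀ j, j + 1 < m → r j ≤ l (j + 1))
    (hgcont : ∀ j < m, Continuous (g j))
    (hgnn : ∀ j < m, ∀ a ∈ Icc (l j) (r j), 0 ≤ g j a)
    (hfcont : Continuous f) (hfm : Monotone f)
    (hsc : ∀ j < m, SingleCrossingOn (g j - f) {x | 0 ≤ g j x ∧ 0 ≤ f x})
    (hjump : ∀ j, j + 1 < m → r j = l (j + 1) → g (j + 1) (r j) ≤ g j (r j))
    (hgap : ∀ j, j + 1 < m → r j < l (j + 1) → g (j + 1) (l (j + 1)) = 0)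
    {j k : ℕ} (hj : j < m) (hk : k < m) {a a' : ℝ} (ha : a ∈ Ioc (l j) (r j))
    (ha' : a' ∈ Ioc (l k) (r k)) (hfa : f a = g j a) (haa' : a < a') : g k a' < f a' := by
  rcases lt_trichotomy k j with hkj | rfl | hjk
  · have := right_le_left_of_lt (fun i hi => (hlr i hi).le) hord hkj hj
    linarith [ha.1, ha'.2]
  · exact (hsc k hk).lt_of_mem_Ioc (fun x hx => hgnn k hk x ⟨ha.1.le.trans hx.1, hx.2⟩)
      (hgcont k hk).continuousOn hfcont.continuousOn (hfm.monotoneOn _) hfa.ge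
      (hfa ▸ hgnn k hk a (Ioc_subset_Icc_self ha)) ⟨haa', ha'.2⟩
  · obtain _ | i := k
    · omega
    obtain ⟨hgr, hfr⟩ := le_right_of_crossing hlr hord hgcont hgnn hfcont hfm hsc hjump hgap
      hj ha hfa (by omega : j ≤ i) (by omega)
    obtain ⟨hgl, hfl⟩ := le_left_succ_of_le_right hfm hord hjump hgap hk hgr hfr
    exact (hsc _ hk).lt_of_mem_Ioc (hgnn _ hk) (hgcont _ hk).continuousOn
      hfcont.continuousOn (hfm.monotoneOn _) hgl hfl ha'

end Chain

theorem envelope_at_most_one_crossing_general (m : ℕ)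
    (l r : ℕ → ℝ) (g : ℕ → ℝ → ℝ) (f : ℝ → ℝ)
    (hlr : ∀ j, j < m → l j < r j)
    (hord : ∀ j, j + 1 < m → r j ≤ l (j + 1))
    (hgcont : ∀ j, j < m → Continuous (g j))
    (hgnn : ∀ j, j < m → ∀ a ∈ Set.Icc (l j) (r j), 0 ≤ g j a)
    (hfcont : Continuous f) (hfmono : StrictMono f)
    (hsc : ∀ j, j < m → ∀ a : ℝ, 0 ≤ g j a → 0 ≤ f a → g j a - f a = 0 →
      (∀ ap : ℝ, 0 ≤ g j ap → 0 ≤ f ap → a < ap → g j ap - f ap < 0) ∧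
      (∀ am : ℝ, 0 ≤ g j am → 0 ≤ f am → am < a → 0 < g j am - f am))
    (hjump : ∀ j, j + 1 < m → r j = l (j + 1) → g (j + 1) (r j) ≤ g j (r j))
    (hgap : ∀ j, j + 1 < m → r j < l (j + 1) → g (j + 1) (l (j + 1)) = 0) :
    ∀ j, j < m → ∀ k, k < m →
      ∀ a ∈ Set.Ioc (l j) (r j), ∀ a' ∈ Set.Ioc (l k) (r k),
        f a = g j a → f a' = g k a' → a = a' := by
  have hsc' : ∀ j < m, SingleCrossingOn (g j - f) {x | 0 ≤ g j x ∧ 0 ≤ f x} :=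
    fun j hj a ha h0 =>
      ⟨fun b hb => (hsc j hj a ha.1 ha.2 h0).1 b hb.1 hb.2,
        fun b hb => (hsc j hj a ha.1 ha.2 h0).2 b hb.1 hb.2⟩
  have hlt := @lt_of_crossing_lt m l r g f hlr hord hgcont hgnn hfcont hfmono.monotone hsc'
    hjump hgap
  intro j hj k hk a ha a' ha' hfa hfa'
  rcases lt_trichotomy a a' with h | h | h
  · exact absurd hfa' (hlt hj hk ha ha' hfa h).ne'
  · exact h
  · exact absurd hfa (hlt hk hj ha' ha hfa' h).ne'

/-- for a fixed price, the utility function `f` of the new model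
(continuous and strictly increasing) and the enveloping utility function of the
data chain (given piecewise by `g j` on `(l j, r j]`) agree in at most one
point of the support of the enveloping function. -/
theorem envelope_at_most_one_crossing (m : ℕ) (hm : 1 ≤ m)
    (l r : ℕ → ℝ) (g : ℕ → ℝ → ℝ) (f : ℝ → ℝ)
    (hlr : ∀ j, j < m → l j < r j)
    (hord : ∀ j, j + 1 < m → r j ≤ l (j + 1))
    (hgcont : ∀ j, j < m → Continuous (g j))
    (hgnn : ∀ j, j < m → ∀ a ∈ Set.Icc (l j) (r j), 0 ≤ g j a)
    (hfcont : Continuous f) (hfmono : StrictMono f)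
    (hsc : ∀ j, j < m → ∀ a : ℝ, 0 ≤ g j a → 0 ≤ f a → g j a - f a = 0 →
      (∀ ap : ℝ, 0 ≤ g j ap → 0 ≤ f ap → a < ap → g j ap - f ap < 0) ∧
      (∀ am : ℝ, 0 ≤ g j am → 0 ≤ f am → am < a → 0 < g j am - f am))
    (hjump : ∀ j, j + 1 < m → r j = l (j + 1) → g (j + 1) (r j) ≤ g j (r j))
    (hgap : ∀ j, j + 1 < m → r j < l (j + 1) → g (j + 1) (l (j + 1)) = 0) :
    ∀ j, j < m → ∀ k, k < m →
      ∀ a ∈ Set.Ioc (l j) (r j), ∀ a' ∈ Set.Ioc (l k) (r k),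
        f a = g j a → f a' = g k a' → a = a' :=
  envelope_at_most_one_crossing_general m l r g f hlr hord hgcont hgnn hfcont hfmono hsc hjump hgap
end

section
/- Let n ≥ 1, let A̲ < A₁ < A₂ < ⋯ < A_n be real numbers, and for each j = 1, …, n let b_j : ℝ → ℝ be continuous and strictly increasing on the interval [A̲, A_j]. Assume that for all j < k the difference b_j − b_k has the single-crossing property on D_{jk} = {a ∈ [A̲, A_j] : b_j(a) ≥ 0 and b_k(a) ≥ 0}, i.e., whenever (b_j − b_k)(a) = 0 with a ∈ D_{jk}, then (b_j − b_k)(a₊) < 0 for all a₊ ∈ D_{jk} with a₊ > a and (b_j − b_k)(a₋) > 0 for all a₋ ∈ D_{jk} with a₋ < a. For each j define the market allocation M_j = {a ∈ [A̲, A_j] : b_j(a) ≥ 0, and for every k ≠ j with a ≤ A_k and b_k(a) ≥ 0, either b_j(a) > b_k(a), or b_j(a) = b_k(a) and k < j}. Then each M_j is order-connected (an interval): if a, a' ∈ M_j and a ≤ a'' ≤ a', then a'' ∈ M_j. -/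
/-!
Take `a ≤ a'' ≤ a'` with `a, a' ∈ M_j`. Monotonicity of `b_j` keeps `a''` affordable. A rival of
lower accuracy that beat `b_j` at `a''` would, by the intermediate value theorem, have met `b_j`
somewhere in `[a, a'')`, and single crossing then forbids it from being ahead at `a''`. A rival
of higher accuracy that was not beaten at `a''` would likewise have met `b_j` in `[a'', a')`,
contradicting that `b_j` beats it at `a'`.
-/

open Set

theorem le_of_forall_eq_imp_lt {u v : ℝ → ℝ} {x y : ℝ} (hxy : x ≤ y)
    (hu : ContinuousOn u (Icc x y)) (hv : ContinuousOn v (Icc x y)) (hx : u x ≤ v x)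
    (hcross : ∀ c ∈ Ico x y, u c = v c → u y < v y) : u y ≤ v y := by
  by_contra! hyx
  obtain ⟨c, hc, hc0⟩ := intermediate_value_Icc hxy (hu.sub hv)
    (show (0 : ℝ) ∈ Icc (u x - v x) (u y - v y) from ⟨by linarith, by linarith⟩)
  have hcu : u c = v c := sub_eq_zero.mp hc0
  have hcy : c ≠ y := by rintro rfl; linarith
  exact (hcross c ⟨hc.1, hc.2.lt_of_ne hcy⟩ hcu).not_gt hyx

section Market

variable {n : ℕ} {Alo : ℝ} {A : Fin n → ℝ} {b : Fin n → ℝ → ℝ}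

def AccuracyCompatible (Alo : ℝ) (A : Fin n → ℝ) (b : Fin n → ℝ → ℝ) : Prop :=
  ∀ j k : Fin n, j < k →
    ∀ a ∈ Icc Alo (A j), 0 ≤ b j a → 0 ≤ b k a → b j a - b k a = 0 →
      (∀ ap ∈ Icc Alo (A j), 0 ≤ b j ap → 0 ≤ b k ap → a < ap → b j ap - b k ap < 0) ∧
      (∀ am ∈ Icc Alo (A j), 0 ≤ b j am → 0 ≤ b k am → am < a → 0 < b j am - b k am)

def marketAllocation (Alo : ℝ) (A : Fin n → ℝ) (b : Fin n → ℝ → ℝ) (j : Fin n) : Set ℝ :=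
  {a | a ∈ Icc Alo (A j) ∧ 0 ≤ b j a ∧
    ∀ k : Fin n, k ≠ j → a ≤ A k → 0 ≤ b k a → b k a < b j a ∨ (b j a = b k a ∧ k < j)}

theorem le_of_mem_marketAllocation {j k : Fin n} {a : ℝ} (ha : a ∈ marketAllocation Alo A b j)
    (hak : a ≤ A k) : b k a ≤ b j a := by
  rcases eq_or_ne k j with rfl | hkj
  · rfl
  rcases le_or_gt 0 (b k a) with hbk | hbk
  · rcases ha.2.2 k hkj hak hbk with h | h
    exacts [h.le, h.1.ge]
  · linarith [ha.2.1]

theorem AccuracyCompatible.le_of_le (hsc : AccuracyCompatible Alo A b)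
    (hcont : ∀ j, ContinuousOn (b j) (Icc Alo (A j)))
    (hmono : ∀ j, StrictMonoOn (b j) (Icc Alo (A j)))
    {i l : Fin n} (hil : i < l) (hA : A i ≤ A l) {x y : ℝ} (hx : Alo ≤ x) (hxy : x ≤ y)
    (hy : y ≤ A i) (hlx : 0 ≤ b l x) (hle : b i x ≤ b l x) (hiy : 0 ≤ b i y) :
    b i y ≤ b l y := by
  have hsub_i : Icc x y ⊆ Icc Alo (A i) := Icc_subset_Icc hx hy
  have hsub_l : Icc x y ⊆ Icc Alo (A l) := Icc_subset_Icc hx (hy.trans hA)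
  have hl_nonneg : ∀ c ∈ Icc x y, 0 ≤ b l c := fun c hc =>
    hlx.trans ((hmono l).monotoneOn (hsub_l (left_mem_Icc.2 hxy)) (hsub_l hc) hc.1)
  refine le_of_forall_eq_imp_lt hxy ((hcont i).mono hsub_i) ((hcont l).mono hsub_l) hle
    fun c hc hcil => ?_
  have hc' : c ∈ Icc x y := Ico_subset_Icc_self hc
  have hy' : y ∈ Icc x y := right_mem_Icc.2 hxy
  exact sub_neg.mp ((hsc i l hil c (hsub_i hc') (hcil ▸ hl_nonneg c hc') (hl_nonneg c hc')
    (sub_eq_zero.mpr hcil)).1 y (hsub_i hy') hiy (hl_nonneg y hy') hc.2)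

theorem marketAllocation_ordConnected (hAmono : StrictMono A)
    (hcont : ∀ j, ContinuousOn (b j) (Icc Alo (A j)))
    (hmono : ∀ j, StrictMonoOn (b j) (Icc Alo (A j)))
    (hsc : AccuracyCompatible Alo A b) (j : Fin n) :
    (marketAllocation Alo A b j).OrdConnected := by
  refine ⟨fun a ha a' ha' a'' ⟨h1, h2⟩ => ?_⟩
  have ha'' : a'' ∈ Icc Alo (A j) := ⟨ha.1.1.trans h1, h2.trans ha'.1.2⟩
  have hbja'' : 0 ≤ b j a'' := ha.2.1.trans ((hmono j).monotoneOn ha.1 ha'' h1)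
  refine ⟨ha'', hbja'', fun k hk hAk hbk => ?_⟩
  rcases hk.lt_or_gt with hkj | hjk
  · have hle : b k a'' ≤ b j a'' := hsc.le_of_le hcont hmono hkj (hAmono hkj).le ha.1.1 h1
      hAk ha.2.1 (le_of_mem_marketAllocation ha (h1.trans hAk)) hbk
    exact hle.lt_or_eq.imp_right fun h => ⟨h.symm, hkj⟩
  · have hAjk : A j ≤ A k := (hAmono hjk).le
    have hbka' : 0 ≤ b k a' := hbk.trans
      ((hmono k).monotoneOn ⟨ha''.1, hAk⟩ ⟨ha''.1.trans h2, ha'.1.2.trans hAjk⟩ h2)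
    have hlt : b k a' < b j a' :=
      (ha'.2.2 k hk (ha'.1.2.trans hAjk) hbka').resolve_right fun h => lt_asymm h.2 hjk
    exact Or.inl (lt_of_not_ge fun hle =>
      (hsc.le_of_le hcont hmono hjk hAjk ha''.1 h2 ha'.1.2 hbk hle ha'.2.1).not_gt hlt)

end Market

theorem market_allocation_connected_general (n : ℕ)
    (Alo : ℝ) (A : Fin n → ℝ) (b : Fin n → ℝ → ℝ)
    (hAmono : StrictMono A)
    (hcont : ∀ j : Fin n, ContinuousOn (b j) (Set.Icc Alo (A j)))
    (hmono : ∀ j : Fin n, StrictMonoOn (b j) (Set.Icc Alo (A j)))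
    (hsc : ∀ j k : Fin n, j < k →
      ∀ a ∈ Set.Icc Alo (A j), 0 ≤ b j a → 0 ≤ b k a → b j a - b k a = 0 →
        (∀ ap ∈ Set.Icc Alo (A j), 0 ≤ b j ap → 0 ≤ b k ap → a < ap →
          b j ap - b k ap < 0) ∧
        (∀ am ∈ Set.Icc Alo (A j), 0 ≤ b j am → 0 ≤ b k am → am < a →
          0 < b j am - b k am)) :
    ∀ j : Fin n,
      ∀ a ∈ {a : ℝ | a ∈ Set.Icc Alo (A j) ∧ 0 ≤ b j a ∧
        ∀ k : Fin n, k ≠ j → a ≤ A k → 0 ≤ b k a →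
          b k a < b j a ∨ (b j a = b k a ∧ k < j)},
      ∀ a' ∈ {a : ℝ | a ∈ Set.Icc Alo (A j) ∧ 0 ≤ b j a ∧
        ∀ k : Fin n, k ≠ j → a ≤ A k → 0 ≤ b k a →
          b k a < b j a ∨ (b j a = b k a ∧ k < j)},
      ∀ a'' : ℝ, a ≤ a'' → a'' ≤ a' →
        a'' ∈ {a : ℝ | a ∈ Set.Icc Alo (A j) ∧ 0 ≤ b j a ∧
          ∀ k : Fin n, k ≠ j → a ≤ A k → 0 ≤ b k a →
            b k a < b j a ∨ (b j a = b k a ∧ k < j)} :=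
  fun j _ ha _ ha' _ h1 h2 =>
    (marketAllocation_ordConnected hAmono hcont hmono hsc j).out ha ha' ⟨h1, h2⟩

/-- Theorem thm:connect: for accuracy-compatible utility
functions, the market allocation of every model is order-connected. -/
theorem market_allocation_connected (n : ℕ) (hn : 1 ≤ n)
    (Alo : ℝ) (A : Fin n → ℝ) (b : Fin n → ℝ → ℝ)
    (hAlo : ∀ j : Fin n, Alo < A j) (hAmono : StrictMono A)
    (hcont : ∀ j : Fin n, ContinuousOn (b j) (Set.Icc Alo (A j)))
    (hmono : ∀ j : Fin n, StrictMonoOn (b j) (Set.Icc Alo (A j)))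
    (hsc : ∀ j k : Fin n, j < k →
      ∀ a ∈ Set.Icc Alo (A j), 0 ≤ b j a → 0 ≤ b k a → b j a - b k a = 0 →
        (∀ ap ∈ Set.Icc Alo (A j), 0 ≤ b j ap → 0 ≤ b k ap → a < ap →
          b j ap - b k ap < 0) ∧
        (∀ am ∈ Set.Icc Alo (A j), 0 ≤ b j am → 0 ≤ b k am → am < a →
          0 < b j am - b k am)) :
    ∀ j : Fin n,
      ∀ a ∈ {a : ℝ | a ∈ Set.Icc Alo (A j) ∧ 0 ≤ b j a ∧
        ∀ k : Fin n, k ≠ j → a ≤ A k → 0 ≤ b k a →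
          b k a < b j a ∨ (b j a = b k a ∧ k < j)},
      ∀ a' ∈ {a : ℝ | a ∈ Set.Icc Alo (A j) ∧ 0 ≤ b j a ∧
        ∀ k : Fin n, k ≠ j → a ≤ A k → 0 ≤ b k a →
          b k a < b j a ∨ (b j a = b k a ∧ k < j)},
      ∀ a'' : ℝ, a ≤ a'' → a'' ≤ a' →
        a'' ∈ {a : ℝ | a ∈ Set.Icc Alo (A j) ∧ 0 ≤ b j a ∧
          ∀ k : Fin n, k ≠ j → a ≤ A k → 0 ≤ b k a →
            b k a < b j a ∨ (b j a = b k a ∧ k < j)} :=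
  market_allocation_connected_general n Alo A b hAmono hcont hmono hsc
end

section
/- Let f : ℝ × ℝ → ℝ be continuous, strictly decreasing in its first argument (the price) and strictly increasing in its second argument (the accuracy requirement). Let a' < A be real numbers and let 𝔟 : ℝ → ℝ be continuous on [a', A]. Suppose there exist ρ and α with a' ≤ α such that f(ρ, α) = 0 and f(ρ, A) = 𝔟(A), and suppose p' satisfies f(p', a') = 0 and 𝔟(a') > 0. Then there exists a ∈ (a', A] with f(p', a) = 𝔟(a) and f(p', a) > 0. -/
/-! Monotonicity gives `f ρ a' ≤ f ρ α = 0 = f p' a'`, hence `p' ≤ ρ` and `𝔟 A = f ρ A ≤ f p' A`.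
Since also `f p' a' = 0 < 𝔟 a'`, the intermediate value theorem yields a crossing of `f p'` and
`𝔟` in `(a', A]`, where `f p' > f p' a' = 0`. -/

theorem exists_mem_Ioc_eq_of_lt_of_le {u v : ℝ → ℝ} {a b : ℝ} (hab : a ≤ b)
    (hu : ContinuousOn u (Set.Icc a b)) (hv : ContinuousOn v (Set.Icc a b))
    (ha : u a < v a) (hb : v b ≤ u b) :
    ∃ c ∈ Set.Ioc a b, u c = v c := by
  have hzero : (0 : ℝ) ∈ Set.Ioc ((u - v) a) ((u - v) b) := by
    simp only [Pi.sub_apply, Set.mem_Ioc]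
    constructor <;> linarith
  obtain ⟨c, hc, hcuv⟩ := intermediate_value_Ioc hab (hu.sub hv) hzero
  exact ⟨c, hc, sub_eq_zero.mp hcuv⟩

/-- existence half of the block lemma: if `f` is continuous,
strictly decreasing in the price and strictly increasing in the accuracy, `𝔟`
is continuous on the block `[a', A]`, `ρ` and `α ≥ a'` satisfy `f ρ α = 0` and
`f ρ A = 𝔟 A`, and `p'` satisfies `f p' a' = 0` with `𝔟 a' > 0`, then the
equation `f p' a = 𝔟 a > 0` is attainable in `(a', A]`. -/
theorem block_lemma_existence (f : ℝ → ℝ → ℝ)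
    (hfcont : Continuous fun q : ℝ × ℝ => f q.1 q.2)
    (hfdec : ∀ a : ℝ, StrictAnti fun p => f p a)
    (hfinc : ∀ p : ℝ, StrictMono fun a => f p a)
    (a' A : ℝ) (haA : a' < A) (env : ℝ → ℝ)
    (henv : ContinuousOn env (Set.Icc a' A))
    (ρ α : ℝ) (hα : a' ≤ α) (hρα : f ρ α = 0) (hρA : f ρ A = env A)
    (p' : ℝ) (hp' : f p' a' = 0) (henva' : 0 < env a') :
    ∃ a ∈ Set.Ioc a' A, f p' a = env a ∧ 0 < f p' a := by
  have hρa' : f ρ a' ≤ f p' a' := by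
    rw [hp', ← hρα]
    exact (hfinc ρ).monotone hα
  have hp'ρ : p' ≤ ρ := (hfdec a').le_iff_ge.mp hρa'
  have henvA : env A ≤ f p' A := hρA ▸ (hfdec A).antitone hp'ρ
  have hf_cont : ContinuousOn (f p') (Set.Icc a' A) :=
    (hfcont.comp (continuous_const.prodMk continuous_id)).continuousOn
  obtain ⟨a, ha, hfa⟩ :=
    exists_mem_Ioc_eq_of_lt_of_le haA.le hf_cont henv (hp' ▸ henva') henvA
  exact ⟨a, ha, hfa, hp' ▸ hfinc p' ha.1⟩
end

section
/- Let b, 𝐛 : ℝ → ℝ, let α > 0 and ε > 0, and assume: (i) α·|x − y| ≤ |b(x) − b(y)| for all x, y ∈ ℝ; (ii) |𝐛(x) − b(x)| < ε for all x ∈ ℝ. If a and 𝐚 satisfy b(a) = 0 and 𝐛(𝐚) = 0, then |a − 𝐚| < ε/α. -/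
theorem dist_lt_div_of_apply_eq {X Y : Type*} [PseudoMetricSpace X] [PseudoMetricSpace Y]
    {f g : X → Y} {α ε : ℝ} (hα : 0 < α) (hlow : ∀ x y, α * dist x y ≤ dist (f x) (f y))
    (herr : ∀ x, dist (g x) (f x) < ε) {a a' : X} (heq : f a = g a') : dist a a' < ε / α := by
  rw [lt_div_iff₀ hα, mul_comm]
  calc α * dist a a' ≤ dist (f a) (f a') := hlow a a'
    _ = dist (g a') (f a') := by rw [heq]
    _ < ε := herr a'

theorem zero_perturbation_bound_general (b bb : ℝ → ℝ) (α ε : ℝ) (hα : 0 < α)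
    (hlow : ∀ x y : ℝ, α * |x - y| ≤ |b x - b y|)
    (herr : ∀ x : ℝ, |bb x - b x| < ε)
    (a aa : ℝ) (ha : b a = 0) (haa : bb aa = 0) : |a - aa| < ε / α := by
  simp only [← Real.dist_eq] at hlow herr ⊢
  exact dist_lt_div_of_apply_eq hα hlow herr (ha.trans haa.symm)

/-- if `b` has lower Lipschitz constant `α` and the true utility `𝐛`
is within pointwise error `ε` of `b`, then the zeros of `b` and `𝐛` differ by
less than `ε / α`. -/
theorem zero_perturbation_bound (b bb : ℝ → ℝ) (α ε : ℝ) (hα : 0 < α) (hε : 0 < ε)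
    (hlow : ∀ x y : ℝ, α * |x - y| ≤ |b x - b y|)
    (herr : ∀ x : ℝ, |bb x - b x| < ε)
    (a aa : ℝ) (ha : b a = 0) (haa : bb aa = 0) : |a - aa| < ε / α :=
  zero_perturbation_bound_general b bb α ε hα hlow herr a aa ha haa
end

section
/- Let g, f, 𝐠, 𝐟 : ℝ → ℝ, let 0 < β < α and ε₁, ε₂ > 0, and assume: (i) |g(x) − g(y)| ≥ α·|x − y| for all x, y; (ii) |f(x) − f(y)| ≤ β·|x − y| for all x, y; (iii) |𝐠(x) − g(x)| < ε₁ and |𝐟(x) − f(x)| < ε₂ for all x. If a* and 𝐚* satisfy g(a*) = f(a*) and 𝐠(𝐚*) = 𝐟(𝐚*), then |a* − 𝐚*| < (ε₁ + ε₂)/(α − β). -/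
/-!
At a crossing point `a` of `g` and `f` the gap `g - f` vanishes, and since `g` expands distances
by at least `α` while `f` expands them by at most `β`, the gap grows at least like
`(α - β) · dist a b` away from `a`. At a crossing point `b` of the perturbed pair the gap is
smaller than `ε₁ + ε₂`, because there the two perturbed values coincide.
-/

section CrossingPoint

variable {X E : Type*} [PseudoMetricSpace X] [SeminormedAddCommGroup E] {g f : X → E} {α β : ℝ}

theorem sub_mul_dist_le_dist_sub_sub
    (hg : ∀ x y, α * dist x y ≤ dist (g x) (g y)) (hf : ∀ x y, dist (f x) (f y) ≤ β * dist x y)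
    (x y : X) : (α - β) * dist x y ≤ dist (g x - f x) (g y - f y) := by
  have hsplit : dist (g x - f x) (g y - f y) = ‖(g x - g y) - (f x - f y)‖ := by
    rw [dist_eq_norm]; congr 1; abel
  calc (α - β) * dist x y ≤ dist (g x) (g y) - dist (f x) (f y) := by
        linarith [hg x y, hf x y]
    _ = ‖g x - g y‖ - ‖f x - f y‖ := by rw [dist_eq_norm, dist_eq_norm]
    _ ≤ dist (g x - f x) (g y - f y) := hsplit ▸ norm_sub_norm_le _ _

theorem dist_lt_of_crossing_of_perturbed_crossing {gg ff : X → E} {ε₁ ε₂ : ℝ} (hβα : β < α)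
    (hg : ∀ x y, α * dist x y ≤ dist (g x) (g y)) (hf : ∀ x y, dist (f x) (f y) ≤ β * dist x y)
    (hgg : ∀ x, dist (gg x) (g x) < ε₁) (hff : ∀ x, dist (ff x) (f x) < ε₂)
    {a b : X} (ha : g a = f a) (hb : gg b = ff b) :
    dist a b < (ε₁ + ε₂) / (α - β) := by
  have gap_at_b : dist (g b) (f b) < ε₁ + ε₂ := by
    calc dist (g b) (f b) ≤ dist (gg b) (g b) + dist (gg b) (f b) := dist_triangle_left _ _ _
      _ < ε₁ + ε₂ := add_lt_add (hgg b) (hb ▸ hff b)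
  have gap_growth := sub_mul_dist_le_dist_sub_sub hg hf a b
  rw [ha, sub_self, dist_zero_left, ← dist_eq_norm] at gap_growth
  rw [lt_div_iff₀ (sub_pos.mpr hβα), mul_comm]
  exact gap_growth.trans_lt gap_at_b

end CrossingPoint

theorem crossing_point_perturbation_bound_general (g f gg ff : ℝ → ℝ) (α β ε₁ ε₂ : ℝ)
    (hβα : β < α)
    (hg : ∀ x y : ℝ, α * |x - y| ≤ |g x - g y|)
    (hf : ∀ x y : ℝ, |f x - f y| ≤ β * |x - y|)
    (hgg : ∀ x : ℝ, |gg x - g x| < ε₁)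
    (hff : ∀ x : ℝ, |ff x - f x| < ε₂)
    (a aa : ℝ) (ha : g a = f a) (haa : gg aa = ff aa) :
    |a - aa| < (ε₁ + ε₂) / (α - β) := by
  simp only [← Real.dist_eq] at hg hf hgg hff ⊢
  exact dist_lt_of_crossing_of_perturbed_crossing hβα hg hf hgg hff ha haa

/-- perturbation bound for the crossing point of two utility
functions: if `g` has lower Lipschitz constant `α`, `f` has upper Lipschitz
constant `β < α`, and the true functions `𝐠, 𝐟` are within pointwise errors
`ε₁, ε₂`, then the crossing points of `(g, f)` and `(𝐠, 𝐟)` differ by less than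
`(ε₁ + ε₂) / (α - β)`. -/
theorem crossing_point_perturbation_bound (g f gg ff : ℝ → ℝ) (α β ε₁ ε₂ : ℝ)
    (hβ : 0 < β) (hβα : β < α) (hε₁ : 0 < ε₁) (hε₂ : 0 < ε₂)
    (hg : ∀ x y : ℝ, α * |x - y| ≤ |g x - g y|)
    (hf : ∀ x y : ℝ, |f x - f y| ≤ β * |x - y|)
    (hgg : ∀ x : ℝ, |gg x - g x| < ε₁)
    (hff : ∀ x : ℝ, |ff x - f x| < ε₂)
    (a aa : ℝ) (ha : g a = f a) (haa : gg aa = ff aa) :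
    |a - aa| < (ε₁ + ε₂) / (α - β) :=
  crossing_point_perturbation_bound_general g f gg ff α β ε₁ ε₂ hβα hg hf hgg hff a aa ha haa
end
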